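/- Let V, W : ℝ≥0 → ℂ be differentiable solutions of the Riccati system dV/dt = −γV − γ|V + e^{2iθ(t)}W|², dW/dt = −(γ + 2iω)W − γ(e^{−iθ(t)}V + e^{iθ(t)}W)². If V(0) ∈ ℝ and V(0) ≥ 0, then V(t) is real for all t and V is monotonically non-increasing wherever V ≥ 0. -/

import Mathlib

/-!
The imaginary part of the right-hand side of the equation for `V` is `-γ Im V`, so `Im V` solves a
linear equation with zero initial value and vanishes identically. The real part of the right-hand
side is `-γ Re V - γ |V + e^{2iθ} W|²`, which is nonpositive wherever `Re V ≥ 0`.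
-/

open Complex Set

theorem HasDerivAt.complex_re {f : ℝ → ℂ} {f' : ℂ} {x : ℝ} (h : HasDerivAt f f' x) :
    HasDerivAt (fun t => (f t).re) f'.re x :=
  reCLM.hasFDerivAt.comp_hasDerivAt x h

theorem HasDerivAt.complex_im {f : ℝ → ℂ} {f' : ℂ} {x : ℝ} (h : HasDerivAt f f' x) :
    HasDerivAt (fun t => (f t).im) f'.im x :=
  imCLM.hasFDerivAt.comp_hasDerivAt x h

theorem eq_zero_of_hasDerivAt_mul_self {g : ℝ → ℝ} {c : ℝ}
    (hg : ∀ t, 0 ≤ t → HasDerivAt g (c * g t) t) (h0 : g 0 = 0) {t : ℝ} (ht : 0 ≤ t) :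
    g t = 0 :=
  eq_zero_of_abs_deriv_le_mul_abs_self_of_eq_zero_right (K := |c|)
    (fun x hx => (hg x hx.1).continuousAt.continuousWithinAt)
    (fun x hx => (hg x hx.1).hasDerivWithinAt) h0
    (fun x _ => by rw [Real.norm_eq_abs, Real.norm_eq_abs, abs_mul]) t ⟨ht, le_rfl⟩

theorem antitoneOn_Icc_of_hasDerivAt_nonpos {f f' : ℝ → ℝ} {a b : ℝ}
    (hf : ∀ x ∈ Icc a b, HasDerivAt f (f' x) x) (hf' : ∀ x ∈ Icc a b, f' x ≤ 0) :
    AntitoneOn f (Icc a b) :=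
  antitoneOn_of_hasDerivWithinAt_nonpos (convex_Icc a b)
    (fun x hx => (hf x hx).continuousAt.continuousWithinAt)
    (fun x hx => (hf x (interior_subset hx)).hasDerivWithinAt)
    (fun x hx => hf' x (interior_subset hx))

section Riccati

variable {V : ℝ → ℂ} {γ : ℝ} {F : ℝ → ℝ}

theorem im_riccati_eq_zero (hV : ∀ t, 0 ≤ t → HasDerivAt V (-(γ : ℂ) * V t - γ * (F t : ℂ) ^ 2) t)
    (h0 : (V 0).im = 0) {t : ℝ} (ht : 0 ≤ t) : (V t).im = 0 := by
  refine eq_zero_of_hasDerivAt_mul_self (g := fun x => (V x).im) (c := -γ) (fun x hx => ?_) h0 ht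
  simpa [← ofReal_pow] using (hV x hx).complex_im

theorem re_riccati_antitoneOn (hγ : 0 ≤ γ) {a b : ℝ}
    (hV : ∀ x ∈ Icc a b, HasDerivAt V (-(γ : ℂ) * V x - γ * (F x : ℂ) ^ 2) x)
    (hpos : ∀ x ∈ Icc a b, 0 ≤ (V x).re) :
    AntitoneOn (fun x => (V x).re) (Icc a b) := by
  refine antitoneOn_Icc_of_hasDerivAt_nonpos (f' := fun x => -γ * (V x).re - γ * F x ^ 2)
    (fun x hx => ?_) (fun x hx => ?_)
  · simpa [← ofReal_pow] using (hV x hx).complex_re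
  · nlinarith [hpos x hx, mul_nonneg hγ (sq_nonneg (F x))]

end Riccati

theorem riccati_V_real_and_decreasing_general
    (γ : ℝ) (hγ : 0 < γ) (θ : ℝ → ℝ)
    (V W : ℝ → ℂ)
    (hV : ∀ t, 0 ≤ t → HasDerivAt V
      (-(γ : ℂ) * V t
        - (γ : ℂ) * (‖V t + Complex.exp (2 * I * (θ t : ℂ)) * W t‖ : ℂ) ^ 2) t)
    (hV0re : (V 0).im = 0) :
    (∀ t, 0 ≤ t → (V t).im = 0) ∧
    (∀ s t, 0 ≤ s → s ≤ t → (∀ u ∈ Set.Icc s t, 0 ≤ (V u).re) →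
      (V t).re ≤ (V s).re) :=
  ⟨fun _ ht => im_riccati_eq_zero hV hV0re ht,
    fun _ _ hs hst hpos => re_riccati_antitoneOn hγ.le (fun x hx => hV x (hs.trans hx.1)) hpos
      ⟨le_rfl, hst⟩ ⟨hst, le_rfl⟩ hst⟩

/-- Riccati equations of the quadrature filter: the conditional covariance
`V` stays real and is non-increasing wherever it is nonnegative. -/
theorem riccati_V_real_and_decreasing
    (γ ω : ℝ) (hγ : 0 < γ) (θ : ℝ → ℝ) (hθ : Continuous θ)
    (V W : ℝ → ℂ)
    (hV : ∀ t, 0 ≤ t → HasDerivAt V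
      (-(γ : ℂ) * V t
        - (γ : ℂ) * (‖V t + Complex.exp (2 * I * (θ t : ℂ)) * W t‖ : ℂ) ^ 2) t)
    (hW : ∀ t, 0 ≤ t → HasDerivAt W
      (-((γ : ℂ) + 2 * I * (ω : ℂ)) * W t
        - (γ : ℂ) * (Complex.exp (-I * (θ t : ℂ)) * V t
            + Complex.exp (I * (θ t : ℂ)) * W t) ^ 2) t)
    (hV0re : (V 0).im = 0) (hV0pos : 0 ≤ (V 0).re) :
    (∀ t, 0 ≤ t → (V t).im = 0) ∧
    (∀ s t, 0 ≤ s → s ≤ t → (∀ u ∈ Set.Icc s t, 0 ≤ (V u).re) →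
      (V t).re ≤ (V s).re) :=
  riccati_V_real_and_decreasing_general γ hγ θ V W hV hV0re
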